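/- Let K > 0 and let γ_K be the Gaussian measure on ℝ with density φ_K(x) = √(K/(2π)) exp(-K x²/2). For every smooth compactly supported (or Lipschitz with integrability) f : ℝ → ℝ, the Poincaré inequality ∫ f² dγ_K - (∫ f dγ_K)² ≤ (1/K) ∫ (f')² dγ_K holds. -/

import Mathlib

open MeasureTheory Real Set Filter

/-- Gaussian density `φ_K(x) = √(K/(2π)) exp(-K x²/2)`. -/
noncomputable def phiK (K x : ℝ) : ℝ := Real.sqrt (K / (2 * Real.pi)) * Real.exp (-K * x ^ 2 / 2)

/-- The Gaussian probability measure `γ_K` on `ℝ` with density `φ_K`. -/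
noncomputable def gaussK (K : ℝ) : Measure ℝ :=
  volume.withDensity fun x => ENNReal.ofReal (phiK K x)

section Aux
variable {K : ℝ}

lemma phiK_nonneg (K x : ℝ) : 0 ≤ phiK K x :=
  mul_nonneg (Real.sqrt_nonneg _) (Real.exp_nonneg _)

lemma phiK_continuous (K : ℝ) : Continuous (phiK K) := by
  unfold phiK; fun_prop

lemma phiK_eq (K : ℝ) : phiK K = fun x => Real.sqrt (K / (2 * Real.pi)) * Real.exp (-(K/2) * x ^ 2) := by
  funext x; unfold phiK; ring_nf

lemma integrable_phiK {K : ℝ} (hK : 0 < K) : Integrable (phiK K) := by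
  rw [phiK_eq]
  exact (integrable_exp_neg_mul_sq (by positivity)).const_mul _

lemma integrable_mul_phiK {K : ℝ} (hK : 0 < K) : Integrable (fun x => x * phiK K x) := by
  rw [phiK_eq]
  simp_rw [mul_comm (Real.sqrt _), ← mul_assoc]
  exact (integrable_mul_exp_neg_mul_sq (show (0:ℝ) < K/2 by positivity)).mul_const _

lemma integral_phiK {K : ℝ} (hK : 0 < K) : ∫ x, phiK K x = 1 := by
  rw [phiK_eq]
  rw [MeasureTheory.integral_const_mul, integral_gaussian]
  rw [← Real.sqrt_mul (by positivity)]
  rw [show K / (2 * π) * (π / (K/2)) = 1 by field_simp]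
  exact Real.sqrt_one

lemma hasDerivAt_phiK {K : ℝ} (hK : 0 < K) (x : ℝ) :
    HasDerivAt (fun t => -(phiK K t / K)) (x * phiK K x) x := by
  have h : HasDerivAt (fun t : ℝ => -K * t ^ 2 / 2) (-K * x) x := by
    have := ((hasDerivAt_pow 2 x).const_mul (-K)).div_const 2
    simpa using this.congr_deriv (by ring)
  have h2 : HasDerivAt (fun t => Real.exp (-K * t ^ 2 / 2)) (Real.exp (-K * x ^ 2 / 2) * (-K * x)) x := h.exp
  have h3 : HasDerivAt (phiK K) (Real.sqrt (K / (2 * Real.pi)) * (Real.exp (-K * x ^ 2 / 2) * (-K * x))) x := h2.const_mul _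
  have h4 := (h3.div_const K).neg
  apply h4.congr_deriv
  unfold phiK
  field_simp

lemma tendsto_phiK (hK : 0 < K) : Tendsto (phiK K) atTop (nhds 0) ∧ Tendsto (phiK K) atBot (nhds 0) := by
  have h1 : Tendsto (fun x:ℝ => x^2) atTop atTop := tendsto_pow_atTop two_ne_zero
  have h2 : Tendsto (fun x:ℝ => x^2) atBot atTop := by
    have := h1.comp tendsto_neg_atBot_atTop
    convert this using 2 with x
    simp [Function.comp]
  constructor <;>
  [ (have h3 := h1.atTop_mul_const_of_neg' (show -(K/2) < 0 by linarith));
    (have h3 := h2.atTop_mul_const_of_neg' (show -(K/2) < 0 by linarith))] <;>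
  · have h4 := Real.tendsto_exp_atBot.comp h3
    have h5 : (fun x : ℝ => Real.exp (-K * x ^ 2 / 2)) = (Real.exp ∘ fun x => x^2 * -(K/2)) := by
      funext x; simp only [Function.comp_apply]; ring_nf
    unfold phiK
    rw [show (0:ℝ) = Real.sqrt (K / (2 * Real.pi)) * 0 by ring]
    exact (h5 ▸ h4).const_mul _

lemma integral_Ioi_mul_phiK (hK : 0 < K) (s : ℝ) :
    ∫ x in Ioi s, x * phiK K x = phiK K s / K := by
  have := integral_Ioi_of_hasDerivAt_of_tendsto' (f := fun t => -(phiK K t / K))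
    (f' := fun x => x * phiK K x) (a := s)
    (fun x _ => hasDerivAt_phiK hK x)
    ((integrable_mul_phiK hK).integrableOn)
    (by simpa using ((tendsto_phiK hK).1.div_const K).neg)
  simpa using this

lemma integral_Iic_mul_phiK (hK : 0 < K) (s : ℝ) :
    ∫ x in Iic s, x * phiK K x = -(phiK K s / K) := by
  have := integral_Iic_of_hasDerivAt_of_tendsto' (f' := fun x => x * phiK K x) (a := s)
    (fun x _ => hasDerivAt_phiK hK x)
    ((integrable_mul_phiK hK).integrableOn)
    (by simpa using ((tendsto_phiK hK).2.div_const K).neg)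
  simpa using this

lemma phiK_meas (K : ℝ) : Measurable fun x => ENNReal.ofReal (phiK K x) :=
  (ENNReal.measurable_ofReal.comp (phiK_continuous K).measurable)

lemma gaussK_eq_nnreal (K : ℝ) :
    gaussK K = volume.withDensity fun x => (((phiK K x).toNNReal : NNReal) : ENNReal) := rfl

lemma integral_gaussK (K : ℝ) (g : ℝ → ℝ) :
    ∫ x, g x ∂gaussK K = ∫ x, g x * phiK K x := by
  rw [gaussK_eq_nnreal, integral_withDensity_eq_integral_smul (f := fun x => (phiK K x).toNNReal)
    (by exact measurable_real_toNNReal.comp (phiK_continuous K).measurable)]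
  congr 1; funext x
  simp [NNReal.smul_def, Real.coe_toNNReal _ (phiK_nonneg K x), mul_comm]

lemma setIntegral_gaussK (K : ℝ) {s : Set ℝ} (hs : MeasurableSet s) (g : ℝ → ℝ) :
    ∫ x in s, g x ∂gaussK K = ∫ x in s, g x * phiK K x := by
  rw [gaussK, restrict_withDensity hs]
  rw [show (fun x => ENNReal.ofReal (phiK K x)) = fun x => (((phiK K x).toNNReal : NNReal) : ENNReal) from rfl]
  rw [integral_withDensity_eq_integral_smul (f := fun x => (phiK K x).toNNReal)
    (by exact measurable_real_toNNReal.comp (phiK_continuous K).measurable)]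
  congr 1; funext x
  simp [NNReal.smul_def, Real.coe_toNNReal _ (phiK_nonneg K x), mul_comm]

lemma integrable_gaussK_iff (K : ℝ) {g : ℝ → ℝ} :
    Integrable g (gaussK K) ↔ Integrable (fun x => g x * phiK K x) := by
  rw [gaussK, integrable_withDensity_iff (phiK_meas K) (by simp [ENNReal.ofReal_lt_top])]
  simp_rw [ENNReal.toReal_ofReal (phiK_nonneg K _)]

lemma gaussK_prob (hK : 0 < K) : IsProbabilityMeasure (gaussK K) := by
  constructor
  rw [gaussK, withDensity_apply _ MeasurableSet.univ, Measure.restrict_univ,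
    ← ofReal_integral_eq_lintegral_ofReal (integrable_phiK hK)
      (Filter.Eventually.of_forall (phiK_nonneg K)),
    integral_phiK hK]
  simp

noncomputable def Pf (s : ℝ) : ℝ → ℝ := (Ici s).indicator (fun t => t - s)
noncomputable def Qf (s : ℝ) : ℝ → ℝ := (Iio s).indicator (fun _ => 1)
noncomputable def Rf (s : ℝ) : ℝ → ℝ := (Ici s).indicator (fun _ => 1)
noncomputable def Wf (s : ℝ) : ℝ → ℝ := (Iio s).indicator (fun t => s - t)

lemma integrable_id_gaussK (hK : 0 < K) : Integrable (fun x : ℝ => x) (gaussK K) :=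
  (integrable_gaussK_iff K).mpr (integrable_mul_phiK hK)

lemma integral_Ici_id_gaussK (hK : 0 < K) (s : ℝ) :
    ∫ x in Ici s, x ∂gaussK K = phiK K s / K := by
  rw [setIntegral_gaussK K measurableSet_Ici, integral_Ici_eq_integral_Ioi,
    integral_Ioi_mul_phiK hK]

lemma integral_Iio_id_gaussK (hK : 0 < K) (s : ℝ) :
    ∫ x in Iio s, x ∂gaussK K = -(phiK K s / K) := by
  rw [setIntegral_gaussK K measurableSet_Iio, ← integral_Iic_eq_integral_Iio,
    integral_Iic_mul_phiK hK]

lemma gaussK_split (hK : 0 < K) (s : ℝ) :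
    (gaussK K (Iio s)).toReal + (gaussK K (Ici s)).toReal = 1 := by
  haveI := gaussK_prob hK
  rw [← ENNReal.toReal_add (measure_ne_top _ _) (measure_ne_top _ _),
    ← measure_union (by simp [Set.disjoint_left]) measurableSet_Ici, Iio_union_Ici,
    measure_univ, ENNReal.toReal_one]


lemma key_ident (s x y : ℝ) :
    |x - y| * (uIoc y x).indicator (fun _ => (1:ℝ)) s
      = Pf s x * Qf s y + Rf s x * Wf s y + Qf s x * Pf s y + Wf s x * Rf s y := by
  unfold Pf Qf Rf Wf
  rcases le_or_gt s x with hx | hx <;> rcases le_or_gt s y with hy | hy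
  · have hm : s ∉ uIoc y x := by
      rw [Set.mem_uIoc]; rintro (⟨h1, h2⟩ | ⟨h1, h2⟩) <;> linarith
    simp [Set.indicator_apply, hm, hx, hy, not_lt.2 hx, not_lt.2 hy]
  · have hm : s ∈ uIoc y x := Set.mem_uIoc.2 (Or.inl ⟨hy, hx⟩)
    rw [Set.indicator_of_mem hm]
    simp only [Set.indicator_apply, Set.mem_Ici, Set.mem_Iio, hm, if_true, hx, hy,
      not_lt.2 hx, not_le.2 hy, if_false, if_pos, if_neg, not_false_iff]
    rw [abs_of_nonneg (by linarith)]
    ring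
  · have hm : s ∈ uIoc y x := Set.mem_uIoc.2 (Or.inr ⟨hx, hy⟩)
    rw [Set.indicator_of_mem hm]
    simp only [Set.indicator_apply, Set.mem_Ici, Set.mem_Iio, hm, if_true, hx, hy,
      not_lt.2 hy, not_le.2 hx, if_false, if_pos, if_neg, not_false_iff]
    rw [abs_of_nonpos (by linarith)]
    ring
  · have hm : s ∉ uIoc y x := by
      rw [Set.mem_uIoc]; rintro (⟨h1, h2⟩ | ⟨h1, h2⟩) <;> linarith
    simp [Set.indicator_apply, hm, hx, hy, not_le.2 hx, not_le.2 hy]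

lemma integrable_Pf (hK : 0 < K) (s : ℝ) : Integrable (Pf s) (gaussK K) := by
  haveI := gaussK_prob hK
  exact ((integrable_id_gaussK hK).sub (integrable_const s)).indicator measurableSet_Ici

lemma integrable_Qf (hK : 0 < K) (s : ℝ) : Integrable (Qf s) (gaussK K) := by
  haveI := gaussK_prob hK
  exact (integrable_const 1).indicator measurableSet_Iio

lemma integrable_Rf (hK : 0 < K) (s : ℝ) : Integrable (Rf s) (gaussK K) := by
  haveI := gaussK_prob hK
  exact (integrable_const 1).indicator measurableSet_Ici

lemma integrable_Wf (hK : 0 < K) (s : ℝ) : Integrable (Wf s) (gaussK K) := by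
  haveI := gaussK_prob hK
  exact ((integrable_const s).sub (integrable_id_gaussK hK)).indicator measurableSet_Iio

lemma integral_Pf (hK : 0 < K) (s : ℝ) :
    ∫ x, Pf s x ∂gaussK K = phiK K s / K - s * (gaussK K (Ici s)).toReal := by
  haveI := gaussK_prob hK
  unfold Pf
  rw [integral_indicator measurableSet_Ici,
    integral_sub ((integrable_id_gaussK hK).integrableOn) (integrableOn_const (measure_ne_top _ _)),
    integral_Ici_id_gaussK hK, setIntegral_const, smul_eq_mul, measureReal_def]
  ring

lemma integral_Wf (hK : 0 < K) (s : ℝ) :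
    ∫ x, Wf s x ∂gaussK K = s * (gaussK K (Iio s)).toReal + phiK K s / K := by
  haveI := gaussK_prob hK
  unfold Wf
  rw [integral_indicator measurableSet_Iio,
    integral_sub (integrableOn_const (measure_ne_top _ _) : IntegrableOn (fun _ => s) (Iio s) (gaussK K)) ((integrable_id_gaussK hK).integrableOn),
    integral_Iio_id_gaussK hK, setIntegral_const, smul_eq_mul, measureReal_def]
  ring

lemma integral_Qf (hK : 0 < K) (s : ℝ) :
    ∫ x, Qf s x ∂gaussK K = (gaussK K (Iio s)).toReal := by
  unfold Qf
  rw [integral_indicator measurableSet_Iio, setIntegral_const, smul_eq_mul, mul_one, measureReal_def]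

lemma integral_Rf (hK : 0 < K) (s : ℝ) :
    ∫ x, Rf s x ∂gaussK K = (gaussK K (Ici s)).toReal := by
  unfold Rf
  rw [integral_indicator measurableSet_Ici, setIntegral_const, smul_eq_mul, mul_one, measureReal_def]


lemma integrable_inner_W (hK : 0 < K) (s x : ℝ) :
    Integrable (fun y => |x - y| * (uIoc y x).indicator (fun _ => (1:ℝ)) s) (gaussK K) := by
  simp_rw [key_ident s x]
  exact ((((integrable_Qf hK s).const_mul _).add ((integrable_Wf hK s).const_mul _)).add
    ((integrable_Pf hK s).const_mul _)).add ((integrable_Rf hK s).const_mul _)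

lemma inner_W_eq (hK : 0 < K) (s x : ℝ) :
    ∫ y, |x - y| * (uIoc y x).indicator (fun _ => (1:ℝ)) s ∂gaussK K
      = Pf s x * (∫ y, Qf s y ∂gaussK K) + Rf s x * (∫ y, Wf s y ∂gaussK K)
        + Qf s x * (∫ y, Pf s y ∂gaussK K) + Wf s x * (∫ y, Rf s y ∂gaussK K) := by
  simp_rw [key_ident s x]
  have i1 : Integrable (fun y => Pf s x * Qf s y) (gaussK K) := (integrable_Qf hK s).const_mul _
  have i2 : Integrable (fun y => Rf s x * Wf s y) (gaussK K) := (integrable_Wf hK s).const_mul _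
  have i3 : Integrable (fun y => Qf s x * Pf s y) (gaussK K) := (integrable_Pf hK s).const_mul _
  have i4 : Integrable (fun y => Wf s x * Rf s y) (gaussK K) := (integrable_Rf hK s).const_mul _
  have i12 : Integrable (fun y => Pf s x * Qf s y + Rf s x * Wf s y) (gaussK K) := i1.add i2
  have i123 : Integrable (fun y => Pf s x * Qf s y + Rf s x * Wf s y + Qf s x * Pf s y)
    (gaussK K) := i12.add i3
  rw [integral_add i123 i4, integral_add i12 i3, integral_add i1 i2,
    MeasureTheory.integral_const_mul, MeasureTheory.integral_const_mul,
    MeasureTheory.integral_const_mul, MeasureTheory.integral_const_mul]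

lemma integrable_outer_W (hK : 0 < K) (s : ℝ) :
    Integrable (fun x => ∫ y, |x - y| * (uIoc y x).indicator (fun _ => (1:ℝ)) s ∂gaussK K)
      (gaussK K) := by
  simp_rw [inner_W_eq hK s]
  exact ((((integrable_Pf hK s).mul_const _).add ((integrable_Rf hK s).mul_const _)).add
    ((integrable_Qf hK s).mul_const _)).add ((integrable_Wf hK s).mul_const _)

lemma W_eq (hK : 0 < K) (s : ℝ) :
    ∫ x, (∫ y, |x - y| * (uIoc y x).indicator (fun _ => (1:ℝ)) s ∂gaussK K) ∂gaussK K
      = 2 * (phiK K s / K) := by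
  simp_rw [inner_W_eq hK s]
  have i1 : Integrable (fun x => Pf s x * (∫ y, Qf s y ∂gaussK K)) (gaussK K) :=
    (integrable_Pf hK s).mul_const _
  have i2 : Integrable (fun x => Rf s x * (∫ y, Wf s y ∂gaussK K)) (gaussK K) :=
    (integrable_Rf hK s).mul_const _
  have i3 : Integrable (fun x => Qf s x * (∫ y, Pf s y ∂gaussK K)) (gaussK K) :=
    (integrable_Qf hK s).mul_const _
  have i4 : Integrable (fun x => Wf s x * (∫ y, Rf s y ∂gaussK K)) (gaussK K) :=
    (integrable_Wf hK s).mul_const _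
  have i12 : Integrable (fun x => Pf s x * (∫ y, Qf s y ∂gaussK K)
    + Rf s x * (∫ y, Wf s y ∂gaussK K)) (gaussK K) := i1.add i2
  have i123 : Integrable (fun x => Pf s x * (∫ y, Qf s y ∂gaussK K)
    + Rf s x * (∫ y, Wf s y ∂gaussK K) + Qf s x * (∫ y, Pf s y ∂gaussK K)) (gaussK K) := i12.add i3
  rw [integral_add i123 i4, integral_add i12 i3, integral_add i1 i2,
    MeasureTheory.integral_mul_const, MeasureTheory.integral_mul_const,
    MeasureTheory.integral_mul_const, MeasureTheory.integral_mul_const,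
    integral_Pf hK s, integral_Qf hK s, integral_Rf hK s, integral_Wf hK s]
  have hab := gaussK_split hK s
  set a := (gaussK K (Iio s)).toReal
  set b := (gaussK K (Ici s)).toReal
  linear_combination (2 * (phiK K s / K)) * hab

lemma inner_W_nonneg (s x : ℝ) :
    0 ≤ ∫ y, |x - y| * (uIoc y x).indicator (fun _ => (1:ℝ)) s ∂gaussK K := by
  refine integral_nonneg fun y => mul_nonneg (abs_nonneg _) ?_
  exact Set.indicator_nonneg (fun _ _ => zero_le_one) _

lemma cs_aux {f : ℝ → ℝ} (hf : ContDiff ℝ (⊤ : ℕ∞) f) {a b : ℝ} (hab : a ≤ b) :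
    (f b - f a)^2 ≤ (b - a) * ∫ s in Ioc a b, (deriv f s)^2 := by
  have hc : Continuous (deriv f) := hf.continuous_deriv (by simp)
  have hFTC : ∫ t in a..b, deriv f t = f b - f a :=
    intervalIntegral.integral_deriv_eq_sub (fun t _ => hf.differentiable (by simp) t)
      (hc.intervalIntegrable a b)
  rcases eq_or_lt_of_le hab with rfl | hlt
  · simp
  · set u := deriv f with hu
    have hIu : IntegrableOn u (Ioc a b) := hc.integrableOn_Ioc
    have hIu2 : IntegrableOn (fun t => u t ^ 2) (Ioc a b) := (hc.pow 2).integrableOn_Ioc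
    set S := ∫ t in Ioc a b, u t with hSdef
    have hS : f b - f a = S := by
      rw [← hFTC, intervalIntegral.integral_of_le hab]
    set L := b - a with hLdef
    have hL : 0 < L := by simp [hLdef]; linarith
    set c := S / L with hcdef
    have h0 : 0 ≤ ∫ t in Ioc a b, (u t - c)^2 :=
      setIntegral_nonneg measurableSet_Ioc (fun t _ => sq_nonneg _)
    have hexp : (fun t => (u t - c)^2) = fun t => u t^2 - 2*c*u t + c^2 := by
      funext t; ring
    rw [hexp] at h0
    have h1 : Integrable (fun t => u t ^ 2 - 2*c*u t) (volume.restrict (Ioc a b)) :=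
      hIu2.sub (hIu.const_mul _)
    have h2 : Integrable (fun _ : ℝ => c^2) (volume.restrict (Ioc a b)) :=
      integrableOn_const (by rw [Real.volume_Ioc]; exact ENNReal.ofReal_ne_top)
    rw [integral_add h1 h2, integral_sub hIu2 (hIu.const_mul _),
      MeasureTheory.integral_const_mul, setIntegral_const, smul_eq_mul,
      measureReal_def, Real.volume_Ioc, ENNReal.toReal_ofReal (by linarith)] at h0
    rw [hS]
    have : S^2 / L ≤ ∫ t in Ioc a b, u t ^ 2 := by
      have e : 2 * c * S - c^2 * L = S^2 / L := by
        rw [hcdef]; field_simp; ring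
      nlinarith [h0, e]
    calc S^2 = L * (S^2 / L) := by field_simp
    _ ≤ L * ∫ t in Ioc a b, u t ^ 2 := by
        exact mul_le_mul_of_nonneg_left this (le_of_lt hL)

lemma cs_bound {f : ℝ → ℝ} (hf : ContDiff ℝ (⊤ : ℕ∞) f) (x y : ℝ) :
    (f x - f y)^2 ≤ |x - y| * ∫ s in uIoc y x, (deriv f s)^2 := by
  rcases le_total y x with h | h
  · rw [uIoc_of_le h, abs_of_nonneg (by linarith)]
    exact cs_aux hf h
  · rw [uIoc_comm, uIoc_of_le h, abs_of_nonpos (by linarith),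
      show (f x - f y)^2 = (f y - f x)^2 by ring, neg_sub]
    exact cs_aux hf h

lemma inner_var_eq (hK : 0 < K) {f : ℝ → ℝ} (hfi : Integrable f (gaussK K))
    (hf2i : Integrable (fun x => f x ^ 2) (gaussK K)) (x : ℝ) :
    ∫ y, (f x - f y)^2 ∂gaussK K
      = (-2 * (∫ y, f y ∂gaussK K)) * f x + ((∫ y, f y ^ 2 ∂gaussK K) + f x ^ 2) := by
  haveI := gaussK_prob hK
  have e : (fun y => (f x - f y)^2) = fun y => (-2 * f x) * f y + (f y ^ 2 + f x ^ 2) := by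
    funext y; ring
  have i1 : Integrable (fun y => (-2 * f x) * f y) (gaussK K) := hfi.const_mul _
  have i2 : Integrable (fun y => f y ^ 2 + f x ^ 2) (gaussK K) := hf2i.add (integrable_const _)
  rw [e, integral_add i1 i2, integral_add hf2i (integrable_const _),
    MeasureTheory.integral_const_mul, integral_const]
  simp [measure_univ]
  ring

lemma var_id (hK : 0 < K) {f : ℝ → ℝ} (hfi : Integrable f (gaussK K))
    (hf2i : Integrable (fun x => f x ^ 2) (gaussK K)) :
    ∫ x, (∫ y, (f x - f y)^2 ∂gaussK K) ∂gaussK K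
      = 2 * ((∫ x, f x ^ 2 ∂gaussK K) - (∫ x, f x ∂gaussK K)^2) := by
  haveI := gaussK_prob hK
  simp_rw [inner_var_eq hK hfi hf2i]
  have i1 : Integrable (fun x => (-2 * (∫ y, f y ∂gaussK K)) * f x) (gaussK K) := hfi.const_mul _
  have i2 : Integrable (fun x => (∫ y, f y ^ 2 ∂gaussK K) + f x ^ 2) (gaussK K) :=
    (integrable_const _).add hf2i
  rw [integral_add i1 i2, integral_add (integrable_const _) hf2i,
    MeasureTheory.integral_const_mul, integral_const]
  simp [measure_univ]
  ring

lemma integrable_inner_var (hK : 0 < K) {f : ℝ → ℝ} (hfi : Integrable f (gaussK K))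
    (hf2i : Integrable (fun x => f x ^ 2) (gaussK K)) :
    Integrable (fun x => ∫ y, (f x - f y)^2 ∂gaussK K) (gaussK K) := by
  haveI := gaussK_prob hK
  simp_rw [inner_var_eq hK hfi hf2i]
  have i1 : Integrable (fun x => (-2 * (∫ y, f y ∂gaussK K)) * f x) (gaussK K) := hfi.const_mul _
  have i2 : Integrable (fun x => (∫ y, f y ^ 2 ∂gaussK K) + f x ^ 2) (gaussK K) :=
    (integrable_const _).add hf2i
  exact i1.add i2

lemma integrable_inner_var' (hK : 0 < K) {f : ℝ → ℝ} (hfi : Integrable f (gaussK K))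
    (hf2i : Integrable (fun x => f x ^ 2) (gaussK K)) (x : ℝ) :
    Integrable (fun y => (f x - f y)^2) (gaussK K) := by
  haveI := gaussK_prob hK
  have e : (fun y => (f x - f y)^2) = fun y => (-2 * f x) * f y + (f y ^ 2 + f x ^ 2) := by
    funext y; ring
  rw [e]
  exact (hfi.const_mul _).add (hf2i.add (integrable_const _))

end Aux

set_option maxHeartbeats 2000000 in
theorem gaussian_poincare (K : ℝ) (hK : 0 < K) (f : ℝ → ℝ)
    (hf : ContDiff ℝ (⊤ : ℕ∞) f) (hsupp : HasCompactSupport f) :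
    ∫ x, f x ^ 2 ∂gaussK K - (∫ x, f x ∂gaussK K) ^ 2
      ≤ (1 / K) * ∫ x, deriv f x ^ 2 ∂gaussK K := by
  haveI := gaussK_prob hK
  have hfc : Continuous f := hf.continuous
  set g : ℝ → ℝ := fun s => deriv f s ^ 2 with hg
  have hgc : Continuous g := ((hf.continuous_deriv (by simp)).pow 2)
  have hgsupp : HasCompactSupport g := by
    have h1 : HasCompactSupport (deriv f) := hsupp.deriv
    have : g = (deriv f) * (deriv f) := by funext t; simp [hg, pow_two]
    rw [this]
    exact h1.mul_right
  have hgnn : ∀ s, 0 ≤ g s := fun s => sq_nonneg _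
  have hgint : Integrable g := hgc.integrable_of_hasCompactSupport hgsupp
  have hfi : Integrable f (gaussK K) := hfc.integrable_of_hasCompactSupport hsupp
  have hf2supp : HasCompactSupport (fun x => f x ^ 2) := by
    have : (fun x => f x ^ 2) = f * f := by funext t; simp [pow_two]
    rw [this]; exact hsupp.mul_right
  have hf2i : Integrable (fun x => f x ^ 2) (gaussK K) :=
    (hfc.pow 2).integrable_of_hasCompactSupport hf2supp
  set h : ℝ → ℝ := fun x => ∫ y, (f x - f y)^2 ∂gaussK K with hh
  have hhnn : ∀ x, 0 ≤ h x := fun x => integral_nonneg (fun y => sq_nonneg _)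
  have hhint : Integrable h (gaussK K) := integrable_inner_var hK hfi hf2i
  have hT1 : ENNReal.ofReal (∫ x, h x ∂gaussK K) = ∫⁻ x, ENNReal.ofReal (h x) ∂gaussK K :=
    ofReal_integral_eq_lintegral_ofReal hhint (Eventually.of_forall hhnn)
  have hT2 : ∀ x, ENNReal.ofReal (h x) = ∫⁻ y, ENNReal.ofReal ((f x - f y)^2) ∂gaussK K :=
    fun x => ofReal_integral_eq_lintegral_ofReal (integrable_inner_var' hK hfi hf2i x)
      (Eventually.of_forall fun y => sq_nonneg _)
  set F : ℝ → ℝ → ℝ → ℝ :=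
    fun s x y => g s * (|x - y| * (uIoc y x).indicator (fun _ => (1:ℝ)) s) with hF
  have hFnn : ∀ s x y, 0 ≤ F s x y := by
    intro s x y
    exact mul_nonneg (hgnn s) (mul_nonneg (abs_nonneg _)
      (Set.indicator_nonneg (fun _ _ => zero_le_one) _))
  have hFeq : ∀ x y, (fun s => F s x y) = fun s => |x - y| * (uIoc y x).indicator g s := by
    intro x y; funext s
    by_cases hs : s ∈ uIoc y x
    · simp only [hF, Set.indicator_of_mem hs]; ring
    · simp only [hF, Set.indicator_of_notMem hs]; ring
  have hFint : ∀ x y, Integrable (fun s => F s x y) := by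
    intro x y
    rw [hFeq x y]
    exact (hgint.indicator measurableSet_uIoc).const_mul _
  have hCS : ∀ x y, ENNReal.ofReal ((f x - f y)^2) ≤ ∫⁻ s, ENNReal.ofReal (F s x y) := by
    intro x y
    rw [← ofReal_integral_eq_lintegral_ofReal (hFint x y)
      (Eventually.of_forall fun s => hFnn s x y)]
    apply ENNReal.ofReal_le_ofReal
    calc (f x - f y)^2 ≤ |x - y| * ∫ s in uIoc y x, (deriv f s)^2 := cs_bound hf x y
    _ = ∫ s, F s x y := by
        rw [hFeq x y, MeasureTheory.integral_const_mul, integral_indicator measurableSet_uIoc]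
  have hmeas3 : Measurable (fun p : ℝ × ℝ × ℝ => ENNReal.ofReal (F p.1 p.2.1 p.2.2)) := by
    have e : ∀ p : ℝ × ℝ × ℝ, (uIoc p.2.2 p.2.1).indicator (fun _ => (1:ℝ)) p.1
        = Set.indicator {q : ℝ × ℝ × ℝ |
            q.2.2 < q.1 ∧ q.1 ≤ q.2.1 ∨ q.2.1 < q.1 ∧ q.1 ≤ q.2.2} (fun _ => 1) p := by
      intro p
      by_cases hp : p.1 ∈ uIoc p.2.2 p.2.1
      · rw [Set.indicator_of_mem hp, Set.indicator_of_mem (by simpa [Set.mem_uIoc] using hp)]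
      · rw [Set.indicator_of_notMem hp,
          Set.indicator_of_notMem (by simpa [Set.mem_uIoc] using hp)]
    have hset : MeasurableSet {q : ℝ × ℝ × ℝ |
        q.2.2 < q.1 ∧ q.1 ≤ q.2.1 ∨ q.2.1 < q.1 ∧ q.1 ≤ q.2.2} := by
      apply MeasurableSet.union
      · exact (measurableSet_lt (measurable_snd.comp measurable_snd) measurable_fst).inter
          (measurableSet_le measurable_fst (measurable_fst.comp measurable_snd))
      · exact (measurableSet_lt (measurable_fst.comp measurable_snd) measurable_fst).inter
          (measurableSet_le measurable_fst (measurable_snd.comp measurable_snd))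
    apply ENNReal.measurable_ofReal.comp
    have e2 : (fun p : ℝ × ℝ × ℝ => F p.1 p.2.1 p.2.2)
        = fun p => g p.1 * (|p.2.1 - p.2.2| * Set.indicator {q : ℝ × ℝ × ℝ |
            q.2.2 < q.1 ∧ q.1 ≤ q.2.1 ∨ q.2.1 < q.1 ∧ q.1 ≤ q.2.2} (fun _ => 1) p) := by
      funext p; rw [hF]; simp only []; rw [e p]
    rw [e2]
    apply Measurable.mul (hgc.measurable.comp measurable_fst)
    apply Measurable.mul
    · exact ((measurable_fst.comp measurable_snd).sub
        (measurable_snd.comp measurable_snd)).abs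
    · exact Measurable.indicator measurable_const hset
  have hswap : (∫⁻ x, ∫⁻ y, (∫⁻ s, ENNReal.ofReal (F s x y)) ∂gaussK K ∂gaussK K)
      = ∫⁻ s, (∫⁻ x, (∫⁻ y, ENNReal.ofReal (F s x y) ∂gaussK K) ∂gaussK K) := by
    have hs1 : ∀ x : ℝ, (∫⁻ y, (∫⁻ s, ENNReal.ofReal (F s x y)) ∂gaussK K)
        = ∫⁻ s, (∫⁻ y, ENNReal.ofReal (F s x y) ∂gaussK K) := by
      intro x
      exact lintegral_lintegral_swap (f := fun y s => ENNReal.ofReal (F s x y))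
        (hmeas3.comp ((measurable_snd).prodMk
          (measurable_const.prodMk measurable_fst))).aemeasurable
    simp_rw [hs1]
    exact lintegral_lintegral_swap
      (f := fun x s => ∫⁻ y, ENNReal.ofReal (F s x y) ∂gaussK K)
      (Measurable.lintegral_prod_right
        (f := fun (p : ℝ × ℝ) (y : ℝ) => ENNReal.ofReal (F p.2 p.1 y))
        (hmeas3.comp ((measurable_snd.comp measurable_fst).prodMk
          ((measurable_fst.comp measurable_fst).prodMk measurable_snd)))).aemeasurable
  have hWs : ∀ s, (∫⁻ x, (∫⁻ y, ENNReal.ofReal (F s x y) ∂gaussK K) ∂gaussK K)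
      = ENNReal.ofReal (g s * (2 * (phiK K s / K))) := by
    intro s
    have e1 : ∀ x y, ENNReal.ofReal (F s x y)
        = ENNReal.ofReal (g s)
          * ENNReal.ofReal (|x - y| * (uIoc y x).indicator (fun _ => (1:ℝ)) s) := by
      intro x y
      rw [hF]; exact ENNReal.ofReal_mul (hgnn s)
    simp_rw [e1, lintegral_const_mul' _ _ ENNReal.ofReal_ne_top]
    have e3 : ∀ x : ℝ, (∫⁻ y, ENNReal.ofReal
        (|x - y| * (uIoc y x).indicator (fun _ => (1:ℝ)) s) ∂gaussK K)
        = ENNReal.ofReal (∫ y, |x - y| * (uIoc y x).indicator (fun _ => (1:ℝ)) s ∂gaussK K) :=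
      fun x => (ofReal_integral_eq_lintegral_ofReal (integrable_inner_W hK s x)
        (Eventually.of_forall fun y => mul_nonneg (abs_nonneg _)
          (Set.indicator_nonneg (fun _ _ => zero_le_one) _))).symm
    simp_rw [e3]
    rw [← ofReal_integral_eq_lintegral_ofReal (integrable_outer_W hK s)
      (Eventually.of_forall (inner_W_nonneg s)), W_eq hK s, ← ENNReal.ofReal_mul (hgnn s)]
  have hg2int : Integrable (fun s => g s * (2 * (phiK K s / K))) := by
    have : Continuous fun s => 2 * (phiK K s / K) := by
      exact continuous_const.mul ((phiK_continuous K).div_const K)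
    exact (hgc.mul this).integrable_of_hasCompactSupport hgsupp.mul_right
  have main : (∫⁻ x, ENNReal.ofReal (h x) ∂gaussK K)
      ≤ ENNReal.ofReal ((2 / K) * ∫ x, g x ∂gaussK K) := by
    calc (∫⁻ x, ENNReal.ofReal (h x) ∂gaussK K)
        = ∫⁻ x, ∫⁻ y, ENNReal.ofReal ((f x - f y)^2) ∂gaussK K ∂gaussK K := by
          exact lintegral_congr hT2
    _ ≤ ∫⁻ x, ∫⁻ y, (∫⁻ s, ENNReal.ofReal (F s x y)) ∂gaussK K ∂gaussK K := by
          exact lintegral_mono fun x => lintegral_mono fun y => hCS x y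
    _ = ∫⁻ s, (∫⁻ x, (∫⁻ y, ENNReal.ofReal (F s x y) ∂gaussK K) ∂gaussK K) := hswap
    _ = ∫⁻ s, ENNReal.ofReal (g s * (2 * (phiK K s / K))) := lintegral_congr hWs
    _ = ENNReal.ofReal (∫ s, g s * (2 * (phiK K s / K))) := by
          rw [← ofReal_integral_eq_lintegral_ofReal hg2int (Eventually.of_forall fun s =>
            mul_nonneg (hgnn s) (mul_nonneg (by norm_num)
              (div_nonneg (phiK_nonneg K s) hK.le)))]
    _ = ENNReal.ofReal ((2 / K) * ∫ x, g x ∂gaussK K) := by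
          rw [integral_gaussK K g]
          rw [show (fun s => g s * (2 * (phiK K s / K))) = fun s => (2/K) * (g s * phiK K s) by
            funext s; ring]
          rw [MeasureTheory.integral_const_mul]
  have hint2 : ∫ x, h x ∂gaussK K ≤ (2 / K) * ∫ x, g x ∂gaussK K := by
    have rnn : 0 ≤ (2 / K) * ∫ x, g x ∂gaussK K :=
      mul_nonneg (by positivity) (integral_nonneg hgnn)
    rw [← ENNReal.ofReal_le_ofReal_iff rnn, hT1]
    exact main
  have hvar := var_id hK hfi hf2i
  rw [show (∫ x, (∫ y, (f x - f y)^2 ∂gaussK K) ∂gaussK K) = ∫ x, h x ∂gaussK K from rfl] at hvar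
  have h2K : (2 : ℝ) / K = 2 * (1 / K) := by ring
  rw [hvar, h2K] at hint2
  linarith
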